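/- arXiv:2010.08256 — 3 statements merged into one kernel-verified Lean document; each statement's English description precedes it below -/
import Mathlib

section
/- For any k×l 0-1 pattern P with k' = max(k,l): if there exists n₀ ≥ k'−1 with sat(P,n₀,n₀) < n₀/(k'−1), then sat(P,n,n) ≤ sat(P,n₀,n₀) for all n ≥ n₀. In particular, for every pattern P either sat(P,n,n) = O(1) or sat(P,n,n) = Θ(n). -/
/-- `M` contains the pattern `P`: there is an order-preserving selection of rows and
columns of `M` whose submatrix can be turned into `P` by changing `1`s to `0`s. -/
def Contains {k l m n : ℕ} (P : Fin k → Fin l → Bool) (M : Fin m → Fin n → Bool) : Prop :=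
  ∃ r : Fin k → Fin m, ∃ c : Fin l → Fin n, StrictMono r ∧ StrictMono c ∧
    ∀ i j, P i j = true → M (r i) (c j) = true

def Avoids {k l m n : ℕ} (P : Fin k → Fin l → Bool) (M : Fin m → Fin n → Bool) : Prop :=
  ¬ Contains P M

/-- The weight of a 0-1 matrix: the number of its `1` entries. -/
def weight {m n : ℕ} (M : Fin m → Fin n → Bool) : ℕ :=
  (Finset.univ.filter (fun p : Fin m × Fin n => M p.1 p.2 = true)).card

/-- The matrix obtained from `M` by changing the entry at `(p,q)` to `1`. -/
def setOne {m n : ℕ} (M : Fin m → Fin n → Bool) (p : Fin m) (q : Fin n) :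
    Fin m → Fin n → Bool :=
  fun i j => if i = p ∧ j = q then true else M i j

/-- `M` is saturating for `P`: it avoids `P` and flipping any `0` entry creates an
occurrence of `P`. -/
def Saturating {k l m n : ℕ} (P : Fin k → Fin l → Bool) (M : Fin m → Fin n → Bool) : Prop :=
  Avoids P M ∧ ∀ p q, M p q = false → Contains P (setOne M p q)

/-- `(r, c)` is an occurrence of `P` in `M`. -/
def IsOcc {k l m n : ℕ} (P : Fin k → Fin l → Bool) (M : Fin m → Fin n → Bool)
    (r : Fin k → Fin m) (c : Fin l → Fin n) : Prop :=
  StrictMono r ∧ StrictMono c ∧ ∀ i j, P i j = true → M (r i) (c j) = true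

/-- `M` is semisaturating for `P`: flipping any `0` entry creates a new occurrence of `P`. -/
def Semisaturating {k l m n : ℕ} (P : Fin k → Fin l → Bool) (M : Fin m → Fin n → Bool) : Prop :=
  ∀ p q, M p q = false → ∃ r c, IsOcc P (setOne M p q) r c ∧ ¬ IsOcc P M r c

/-- `ex(P,m,n)`: the maximum weight of an `m × n` matrix avoiding `P`. -/
noncomputable def exF {k l : ℕ} (P : Fin k → Fin l → Bool) (m n : ℕ) : ℕ :=
  sSup {w | ∃ M : Fin m → Fin n → Bool, Avoids P M ∧ weight M = w}

/-- `sat(P,m,n)`: the minimum weight of an `m × n` matrix saturating for `P`. -/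
noncomputable def satF {k l : ℕ} (P : Fin k → Fin l → Bool) (m n : ℕ) : ℕ :=
  sInf {w | ∃ M : Fin m → Fin n → Bool, Saturating P M ∧ weight M = w}

/-- `ssat(P,m,n)`: the minimum weight of an `m × n` matrix semisaturating for `P`. -/
noncomputable def ssatF {k l : ℕ} (P : Fin k → Fin l → Bool) (m n : ℕ) : ℕ :=
  sInf {w | ∃ M : Fin m → Fin n → Bool, Semisaturating P M ∧ weight M = w}

/-!
Let `k' = max k l` and let `M` be an `n × n` matrix saturating for `P` with
`(k' - 1) · weight M < n`. Counting the nonzero rows, some zero row `b` of `M` is preceded by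
`k' - 2` further zero rows (or by the top of the matrix), and a zero in the first row of `M` shows
that the first row of `P` is nonzero. Duplicating row `b` then keeps `M` saturating without
changing its weight; doing the same for a column (by transposition) gives an `(n + 1) × (n + 1)`
saturating matrix of the same weight, whence `sat(P, n, n) ≤ sat(P, n₀, n₀)` for all `n ≥ n₀`.
If no `n₀` qualifies, then `n ≤ (k' - 1) · sat(P, n, n)` for every `n ≥ k' - 1`, while the matrix
whose only zeros form a block spanning the possible positions of one entry `1` of `P` gives
`sat(P, n, n) ≤ (k + l) · n`.
-/

open Finset Matrix

section

variable {k l m n : ℕ} {P : Fin k → Fin l → Bool}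

lemma Contains.of_comp {M : Fin m → Fin n → Bool} {m' : ℕ} {ι : Fin m' → Fin m}
    (hι : StrictMono ι) (h : Contains P fun i => M (ι i)) : Contains P M := by
  obtain ⟨r, c, hr, hc, hrc⟩ := h
  exact ⟨ι ∘ r, c, hι.comp hr, hc, hrc⟩

lemma Contains.transpose {M : Fin m → Fin n → Bool} (h : Contains P M) :
    Contains Pᵀ Mᵀ := by
  obtain ⟨r, c, hr, hc, hrc⟩ := h
  exact ⟨c, r, hc, hr, fun j i h => hrc i j h⟩

lemma setOne_transpose (M : Fin m → Fin n → Bool) (p : Fin m) (q : Fin n) :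
    setOne Mᵀ q p = (setOne M p q)ᵀ := by
  ext j i
  simp only [setOne, and_comm]
  rfl

lemma setOne_comp {m' : ℕ} (M : Fin m → Fin n → Bool) {ι : Fin m' → Fin m}
    (hι : Function.Injective ι) (p : Fin m') (q : Fin n) :
    (fun i => setOne M (ι p) q (ι i)) = setOne (fun i => M (ι i)) p q := by
  ext i j
  simp only [setOne, hι.eq_iff]

lemma Saturating.transpose {M : Fin m → Fin n → Bool} (h : Saturating P M) :
    Saturating Pᵀ Mᵀ :=
  ⟨fun hc => h.1 hc.transpose, fun q p hqp =>
    setOne_transpose M p q ▸ (h.2 p q hqp).transpose⟩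

lemma weight_transpose (M : Fin m → Fin n → Bool) : weight Mᵀ = weight M :=
  Finset.card_equiv (Equiv.prodComm _ _) fun _ => by simp only [mem_filter, mem_univ, true_and]; rfl

lemma weight_setOne {M : Fin m → Fin n → Bool} {p : Fin m} {q : Fin n} (h : M p q = false) :
    weight (setOne M p q) = weight M + 1 := by
  classical
  rw [weight, weight, ← Finset.card_insert_of_notMem (a := (p, q)) (by simp [h])]
  congr 1
  ext ⟨i, j⟩
  by_cases hij : i = p ∧ j = q <;> simp_all [setOne, Prod.ext_iff]

lemma weight_eq_sum_rows (M : Fin m → Fin n → Bool) :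
    weight M = ∑ i, (univ.filter fun j => M i j = true).card := by
  simp only [weight, Finset.card_filter, Fintype.sum_prod_type]

lemma exists_eq_false_of_weight_lt {M : Fin m → Fin n → Bool} (h : weight M < n) (i : Fin m) :
    ∃ j, M i j = false := by
  classical
  by_contra! hi
  have : (univ.image fun j => (i, j)).card ≤ weight M :=
    card_le_card fun p hp => by obtain ⟨j, -, rfl⟩ := mem_image.1 hp; simpa using hi j
  rw [card_image_of_injective _ fun j j' h => by simpa using h] at this
  rw [card_univ, Fintype.card_fin] at this
  omega

lemma not_contains_of_lt {M : Fin m → Fin n → Bool} (h : m < k ∨ n < l) : ¬ Contains P M := by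
  rintro ⟨r, c, hr, hc, -⟩
  have := Fintype.card_le_of_injective r hr.injective
  have := Fintype.card_le_of_injective c hc.injective
  simp only [Fintype.card_fin] at *
  omega

lemma contains_of_forall_eq_false (hP : ∀ i j, P i j = false) (hk : k ≤ m) (hl : l ≤ n)
    (M : Fin m → Fin n → Bool) : Contains P M :=
  ⟨Fin.castLE hk, Fin.castLE hl, Fin.strictMono_castLE hk, Fin.strictMono_castLE hl,
    fun i j h => by simp [hP i j] at h⟩

lemma exists_saturating_of_avoids {M₀ : Fin m → Fin n → Bool} (h : Avoids P M₀) :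
    ∃ M : Fin m → Fin n → Bool, Saturating P M := by
  classical
  obtain ⟨M, hM, hmax⟩ := (univ.filter (Avoids P)).exists_max_image weight ⟨M₀, by simpa⟩
  refine ⟨M, (mem_filter.1 hM).2, fun p q hpq => by_contra fun hc => ?_⟩
  have := hmax (setOne M p q) (mem_filter.2 ⟨mem_univ _, hc⟩)
  rw [weight_setOne hpq] at this
  omega

lemma satF_le_weight {M : Fin m → Fin n → Bool} (h : Saturating P M) : satF P m n ≤ weight M :=
  Nat.sInf_le ⟨M, h, rfl⟩

lemma exists_saturating_weight_eq_satF (h : ∃ M : Fin m → Fin n → Bool, Saturating P M) :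
    ∃ M : Fin m → Fin n → Bool, Saturating P M ∧ weight M = satF P m n := by
  obtain ⟨M, hM⟩ := h
  exact Nat.sInf_mem (s := {w | ∃ M : Fin m → Fin n → Bool, Saturating P M ∧ weight M = w})
    ⟨weight M, M, hM, rfl⟩

lemma satF_eq_mul_of_lt (h : m < k ∨ n < l) : satF P m n = m * n := by
  have hsat : Saturating P (fun _ _ => true : Fin m → Fin n → Bool) :=
    ⟨not_contains_of_lt h, fun _ _ h => by simp at h⟩
  obtain ⟨M, hM, hw⟩ := exists_saturating_weight_eq_satF ⟨_, hsat⟩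
  have hones : M = fun _ _ => true := by
    ext p q
    by_contra hpq
    exact not_contains_of_lt h (hM.2 p q (by simpa using hpq))
  rw [← hw, hones]
  simp [weight]

/-- No matrix avoids `P`, so `satF` is the junk value `sInf ∅ = 0`. -/
lemma satF_eq_zero_of_forall_eq_false (hP : ∀ i j, P i j = false) (hk : k ≤ m) (hl : l ≤ n) :
    satF P m n = 0 := by
  rw [satF, Nat.sInf_eq_zero]
  right
  ext w
  simpa using fun M hM _ => hM.1 (contains_of_forall_eq_false hP hk hl M)

lemma satF_eq_zero_of_max_le_one (hP : ∃ i j, P i j = true) (h : max k l ≤ 1) :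
    satF P m n = 0 := by
  obtain ⟨i₀, j₀, hP₀⟩ := hP
  have : Subsingleton (Fin k) := Fin.subsingleton_iff_le_one.2 (by omega)
  have : Subsingleton (Fin l) := Fin.subsingleton_iff_le_one.2 (by omega)
  have hsat : Saturating P (fun _ _ => false : Fin m → Fin n → Bool) := by
    refine ⟨fun ⟨r, c, _, _, hrc⟩ => by simpa using hrc i₀ j₀ hP₀, fun p q _ => ?_⟩
    exact ⟨fun _ => p, fun _ => q, Subsingleton.strictMono _, Subsingleton.strictMono _,
      fun _ _ _ => by simp [setOne]⟩
  exact Nat.eq_zero_of_le_zero (by simpa [weight] using satF_le_weight hsat)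

lemma Fin.val_succAbove (z : Fin (m + 1)) (x : Fin m) :
    (z.succAbove x).val = if x.val < z.val then x.val else x.val + 1 := by
  simp only [Fin.succAbove, Fin.lt_def, Fin.val_castSucc]
  split_ifs <;> simp

lemma Fin.val_predAbove (b : Fin m) (z : Fin (m + 1)) :
    (b.predAbove z).val = if b.val < z.val then z.val - 1 else z.val := by
  simp only [Fin.predAbove, Fin.lt_def, Fin.val_castSucc]
  split_ifs <;> simp

lemma Fin.predAbove_succ_succAbove (b x : Fin m) : b.predAbove (b.succ.succAbove x) = x := by
  have := Fin.val_predAbove b (b.succ.succAbove x)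
  have := Fin.val_succAbove b.succ x
  simp only [Fin.val_succ] at *
  ext
  split_ifs at * <;> omega

def dupRow (M : Fin m → Fin n → Bool) (b : Fin m) : Fin (m + 1) → Fin n → Bool :=
  fun i => M (b.predAbove i)

lemma weight_dupRow {M : Fin m → Fin n → Bool} {b : Fin m} (hb : ∀ j, M b j = false) :
    weight (dupRow M b) = weight M := by
  rw [weight_eq_sum_rows, weight_eq_sum_rows, Fin.sum_univ_succAbove _ b.castSucc]
  simp [dupRow, Fin.predAbove_succAbove, hb]

/-- A flip in one copy of row `b` is a flip of `M` seen through the embedding that skips the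
other copy. -/
lemma contains_setOne_dupRow {M : Fin m → Fin n → Bool}
    (hM : ∀ p q, M p q = false → Contains P (setOne M p q)) (b : Fin m) (p : Fin (m + 1))
    (q : Fin n) (hpq : dupRow M b p q = false) : Contains P (setOne (dupRow M b) p q) := by
  obtain ⟨z, hzp, hz⟩ : ∃ z : Fin (m + 1), z ≠ p ∧ ∀ x, b.predAbove (z.succAbove x) = x := by
    by_cases hp : p = b.castSucc
    · exact ⟨b.succ, hp ▸ (Fin.castSucc_lt_succ (i := b)).ne', Fin.predAbove_succ_succAbove b⟩
    · exact ⟨b.castSucc, Ne.symm hp, Fin.predAbove_succAbove b⟩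
  obtain ⟨x, rfl⟩ := Fin.exists_succAbove_eq hzp.symm
  refine Contains.of_comp (Fin.strictMono_succAbove z) ?_
  rw [setOne_comp _ Fin.succAbove_right_injective]
  convert hM x q (by simpa [dupRow, hz] using hpq) using 2
  ext i j
  simp [dupRow, hz]

lemma exists_mem_Ico_notMem_range (f : Fin k → ℕ) {i₀ : Fin k} {a : ℕ}
    (h : f i₀ ∉ Finset.Ico a (a + k)) : ∃ z ∈ Finset.Ico a (a + k), z ∉ Set.range f := by
  classical
  by_contra! hrange
  have hsub : insert (f i₀) (Finset.Ico a (a + k)) ⊆ univ.image f := by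
    intro z hz
    rcases Finset.mem_insert.1 hz with rfl | hz
    · exact mem_image_of_mem f (mem_univ i₀)
    · obtain ⟨i, rfl⟩ := hrange z hz
      exact mem_image_of_mem f (mem_univ i)
  have := (card_le_card hsub).trans card_image_le
  rw [card_insert_of_notMem h, Nat.card_Ico, card_univ, Fintype.card_fin] at this
  omega

def ZeroRunEndingAt (M : Fin m → Fin n → Bool) (b : Fin m) (d : ℕ) : Prop :=
  ∀ x : Fin m, x.val ≤ b.val → b.val ≤ x.val + d → ∀ j, M x j = false

lemma exists_zeroRunEndingAt (M : Fin m → Fin n → Bool) {d : ℕ} (h : (d + 1) * weight M < m) :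
    ∃ b, ZeroRunEndingAt M b d := by
  classical
  by_contra! hno
  simp only [ZeroRunEndingAt, not_forall, Bool.not_eq_false] at hno
  let rows := (univ.filter fun p : Fin m × Fin n => M p.1 p.2 = true).image Prod.fst
  have hcover : (univ : Finset (Fin m)) ⊆
      rows.biUnion fun x => univ.filter fun b : Fin m => x.val ≤ b.val ∧ b.val ≤ x.val + d := by
    intro b _
    obtain ⟨x, hxb, hbx, j, hj⟩ := hno b
    exact mem_biUnion.2 ⟨x, mem_image.2 ⟨(x, j), by simpa using hj, rfl⟩,
      mem_filter.2 ⟨mem_univ _, hxb, hbx⟩⟩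
  have hblock (x : Fin m) :
      (univ.filter fun b : Fin m => x.val ≤ b.val ∧ b.val ≤ x.val + d).card ≤ d + 1 := by
    calc _ ≤ (Finset.Icc x.val (x.val + d)).card :=
          card_le_card_of_injOn Fin.val (fun b hb => by simpa using hb) Fin.val_injective.injOn
      _ = d + 1 := by rw [Nat.card_Icc]; omega
  have := (card_le_card hcover).trans (card_biUnion_le_card_mul _ _ _ fun x _ => hblock x)
  have : rows.card ≤ weight M := card_image_le
  simp only [card_univ, Fintype.card_fin] at *
  nlinarith

lemma ZeroRunEndingAt.dupRow_eq_false {M : Fin m → Fin n → Bool} {b : Fin m} {d : ℕ}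
    (hb : ZeroRunEndingAt M b d) {z : Fin (m + 1)} (hz : z.val ≤ b.val + 1)
    (hz' : b.val ≤ z.val + d) (j : Fin n) : dupRow M b z j = false := by
  have := Fin.val_predAbove b z
  apply hb <;> split_ifs at this <;> omega

lemma ZeroRunEndingAt.dupRow_comp_succAbove {M : Fin m → Fin n → Bool} {b : Fin m} {d : ℕ}
    (hb : ZeroRunEndingAt M b d) {z : Fin (m + 1)} (hz : z.val ≤ b.val + 1)
    (hz' : b.val ≤ z.val + d) : (fun x => dupRow M b (z.succAbove x)) = M := by
  ext x j
  have h₁ := Fin.val_succAbove z x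
  have h₂ := Fin.val_predAbove b (z.succAbove x)
  by_cases hx : b.predAbove (z.succAbove x) = x
  · rw [dupRow, hx]
  · rw [Fin.ext_iff] at hx
    rw [dupRow, hb _ _ _ j, hb _ _ _ j] <;> split_ifs at h₁ h₂ <;> omega

lemma ZeroRunEndingAt.avoids_dupRow {M : Fin m → Fin n → Bool} {b : Fin m} {d : ℕ}
    (hb : ZeroRunEndingAt M b d) (hkd : k ≤ d + 2) (hM : Avoids P M)
    (hP : ∃ i j, IsBot i ∧ P i j = true) : Avoids P (dupRow M b) := by
  rintro ⟨r, c, hr, hc, hrc⟩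
  obtain ⟨i₀, j₀, hi₀, hP₀⟩ := hP
  -- The occurrence misses a row `z` among the `k` rows ending at the second copy of row `b`:
  -- these rows are zero and the first row of the occurrence is not, so by pigeonhole it cannot
  -- use all of them. Deleting row `z` gives back `M`.
  obtain ⟨z, hz, hz', hzr⟩ : ∃ z : Fin (m + 1), z.val ≤ b.val + 1 ∧ b.val + 2 ≤ z.val + k ∧
      ∀ i, r i ≠ z := by
    by_contra! hall
    obtain ⟨i, hi⟩ := hall b.succ (by simp) (by rw [Fin.val_succ]; have := i₀.pos; omega)
    have hr₀ : (r i₀).val ≤ b.val + 1 := by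
      simpa [hi, Fin.le_def] using hr.monotone (hi₀ i)
    have hr₀' : (r i₀).val + k < b.val + 2 := by
      by_contra! h
      have := hb.dupRow_eq_false hr₀ (by omega) (c j₀)
      simp [hrc i₀ j₀ hP₀] at this
    obtain ⟨z, hz, hzr⟩ := exists_mem_Ico_notMem_range (fun i => (r i).val) (i₀ := i₀)
      (a := b.val + 2 - k) (by rw [mem_Ico]; omega)
    rw [mem_Ico] at hz
    obtain ⟨i, hi⟩ := hall ⟨z, by omega⟩ (by dsimp only; omega) (by dsimp only; omega)
    exact hzr ⟨i, by simp [hi]⟩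
  choose r' hr' using fun i => Fin.exists_succAbove_eq (hzr i)
  apply hM
  rw [← hb.dupRow_comp_succAbove (z := z) hz (by omega)]
  refine ⟨r', c, fun i i' h => ?_, hc, fun i j h => ?_⟩
  · rw [← Fin.succAbove_lt_succAbove_iff (p := z), hr', hr']
    exact hr h
  · simpa [hr'] using hrc i j h

lemma Saturating.exists_isBot_row {M : Fin m → Fin n → Bool} (hM : Saturating P M) {p : Fin m}
    (hp : IsBot p) {q : Fin n} (hq : M p q = false) : ∃ i j, IsBot i ∧ P i j = true := by
  obtain ⟨r, c, hr, hc, hrc⟩ := hM.2 p q hq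
  obtain ⟨i, j, hij, hnew⟩ : ∃ i j, P i j = true ∧ M (r i) (c j) = false := by
    by_contra! h
    exact hM.1 ⟨r, c, hr, hc, fun i j hij => by simpa using h i j hij⟩
  have hri : r i = p := by
    have := hrc i j hij
    simp only [setOne] at this
    split_ifs at this with h
    · exact h.1
    · simp [hnew] at this
  refine ⟨i, j, fun i' => not_lt.1 fun hi' => ?_, hij⟩
  exact not_lt_of_ge (hp (r i')) (hri ▸ hr hi')

lemma Saturating.exists_succ_rows {M : Fin m → Fin n → Bool} (hM : Saturating P M) {d : ℕ}
    (hkd : k ≤ d + 2) (hm : (d + 1) * weight M < m) (hn : weight M < n) :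
    ∃ M' : Fin (m + 1) → Fin n → Bool, Saturating P M' ∧ weight M' = weight M := by
  obtain ⟨b, hb⟩ := exists_zeroRunEndingAt M hm
  obtain ⟨q, hq⟩ := exists_eq_false_of_weight_lt hn ⟨0, b.pos⟩
  have hP := hM.exists_isBot_row (fun _ => Nat.zero_le _) hq
  exact ⟨dupRow M b, ⟨hb.avoids_dupRow hkd hM.1 hP, contains_setOne_dupRow hM.2 b⟩,
    weight_dupRow (hb b le_rfl (Nat.le_add_right _ _))⟩

lemma Saturating.exists_succ_square {M : Fin n → Fin n → Bool} (hM : Saturating P M)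
    (hkl : 2 ≤ max k l) (hw : (max k l - 1) * weight M < n) :
    ∃ M' : Fin (n + 1) → Fin (n + 1) → Bool, Saturating P M' ∧ weight M' = weight M := by
  have hd : max k l - 2 + 1 = max k l - 1 := by omega
  have hn : weight M < n := lt_of_le_of_lt (Nat.le_mul_of_pos_left _ (by omega)) hw
  obtain ⟨M₁, hM₁, hw₁⟩ := hM.exists_succ_rows (d := max k l - 2) (by omega) (hd ▸ hw) hn
  obtain ⟨M₂, hM₂, hw₂⟩ := hM₁.transpose.exists_succ_rows (d := max k l - 2) (by omega)
    (by rwa [weight_transpose, hw₁, hd]) (by rw [weight_transpose, hw₁]; omega)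
  exact ⟨M₂ᵀ, hM₂.transpose, by rw [weight_transpose, hw₂, weight_transpose, hw₁]⟩

lemma exists_saturating_weight_eq_satF_of_le (hP : ∃ i j, P i j = true) (hkl : 2 ≤ max k l)
    {n₀ : ℕ} (h : (max k l - 1) * satF P n₀ n₀ < n₀) {n : ℕ} (hn : n₀ ≤ n) :
    ∃ M : Fin n → Fin n → Bool, Saturating P M ∧ weight M = satF P n₀ n₀ := by
  obtain ⟨i, j, hij⟩ := hP
  have hzero : Avoids P (fun _ _ => false : Fin n₀ → Fin n₀ → Bool) :=
    fun ⟨r, c, _, _, hrc⟩ => by simpa using hrc i j hij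
  induction n, hn using Nat.le_induction with
  | base => exact exists_saturating_weight_eq_satF (exists_saturating_of_avoids hzero)
  | succ n hn ih =>
    obtain ⟨M, hM, hw⟩ := ih
    obtain ⟨M', hM', hw'⟩ := hM.exists_succ_square hkl (hw ▸ h.trans_le hn)
    exact ⟨M', hM', hw'.trans hw⟩

theorem satF_le_satF_of_mul_lt {n₀ : ℕ} (hn₀ : max k l - 1 ≤ n₀)
    (h : (max k l - 1) * satF P n₀ n₀ < n₀) {n : ℕ} (hn : n₀ ≤ n) :
    satF P n n ≤ satF P n₀ n₀ := by
  by_cases hP : ∃ i j, P i j = true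
  · rcases le_or_gt (max k l) 1 with hkl | hkl
    · simp [satF_eq_zero_of_max_le_one hP hkl]
    · obtain ⟨M, hM, hw⟩ := exists_saturating_weight_eq_satF_of_le hP hkl h hn
      exact hw ▸ satF_le_weight hM
  · have hkl : max k l ≤ n₀ := by
      by_contra! hlt
      rw [satF_eq_mul_of_lt (by omega), show max k l - 1 = n₀ by omega] at h
      nlinarith [Nat.le_mul_self n₀]
    rw [satF_eq_zero_of_forall_eq_false (by simpa using hP) (by omega : k ≤ n) (by omega : l ≤ n)]
    exact Nat.zero_le _

lemma StrictMono.val_le_val {r : Fin k → Fin m} (hr : StrictMono r) (i : Fin k) :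
    i.val ≤ (r i).val := by
  classical
  calc i.val = ((Iio i).image r).card := by
        rw [card_image_of_injective _ hr.injective, Fin.card_Iio]
    _ ≤ (Iio (r i)).card := card_le_card fun x hx => by
          obtain ⟨j, hj, rfl⟩ := mem_image.1 hx
          exact mem_Iio.2 (hr (mem_Iio.1 hj))
    _ = (r i).val := Fin.card_Iio _

lemma StrictMono.val_add_le {r : Fin k → Fin m} (hr : StrictMono r) (i : Fin k) :
    (r i).val + k ≤ m + i.val := by
  have hrev : StrictMono fun i : Fin k => (r i.rev).rev := fun i j h =>
    Fin.rev_lt_rev.2 (hr (Fin.rev_lt_rev.2 h))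
  have := hrev.val_le_val i.rev
  simp only [Fin.rev_rev, Fin.val_rev] at this
  omega

def window (m k a : ℕ) : Finset (Fin m) := univ.filter fun i => a ≤ i.val ∧ i.val + k ≤ m + a

lemma StrictMono.mem_window {r : Fin k → Fin m} (hr : StrictMono r) (i : Fin k) :
    r i ∈ window m k i.val :=
  mem_filter.2 ⟨mem_univ _, hr.val_le_val i, hr.val_add_le i⟩

lemma card_compl_window_le {a : ℕ} (ha : a < k) : (window m k a)ᶜ.card ≤ k - 1 := by
  calc (window m k a)ᶜ.card ≤ (range a ∪ Ico (m + a + 1 - k) m).card :=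
        card_le_card_of_injOn Fin.val (fun i hi => by
          simp only [window, compl_filter, mem_coe, mem_filter, mem_univ, true_and, not_and_or,
            not_le] at hi
          simp only [coe_union, coe_range, coe_Ico, Set.mem_union, Set.mem_Iio, Set.mem_Ico]
          omega) Fin.val_injective.injOn
    _ ≤ (range a).card + (Ico (m + a + 1 - k) m).card := card_union_le _ _
    _ ≤ k - 1 := by rw [card_range, Nat.card_Ico]; omega

lemma exists_strictMono_apply_eq {a : Fin k} (hk : k ≤ m) {p : Fin m}
    (hp : p ∈ window m k a.val) :
    ∃ r : Fin k → Fin m, StrictMono r ∧ r a = p ∧ ∀ i ≠ a, r i ∉ window m k a.val := by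
  simp only [window, mem_filter, mem_univ, true_and] at hp ⊢
  refine ⟨fun i => if i.val < a.val then ⟨i.val, by omega⟩ else if i.val = a.val then p
    else ⟨m - k + i.val, by omega⟩, fun i j hij => ?_, by simp, fun i hi => ?_⟩
  · rw [Fin.lt_def] at hij ⊢
    dsimp only
    split_ifs <;> (try dsimp only) <;> omega
  · have := Fin.val_ne_of_ne hi
    dsimp only
    split_ifs <;> (try dsimp only) <;> omega

def frame (m n : ℕ) (a : Fin k) (b : Fin l) : Fin m → Fin n → Bool :=
  fun i j => decide (i ∉ window m k a.val ∨ j ∉ window n l b.val)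

lemma saturating_frame {a : Fin k} {b : Fin l} (hab : P a b = true) (hk : k ≤ m) (hl : l ≤ n) :
    Saturating P (frame m n a b) := by
  refine ⟨fun ⟨r, c, hr, hc, hrc⟩ => ?_, fun p q hpq => ?_⟩
  · simpa [frame, hr.mem_window a, hc.mem_window b] using hrc a b hab
  · simp only [frame, decide_eq_false_iff_not, not_or, not_not] at hpq
    obtain ⟨r, hr, hra, hr'⟩ := exists_strictMono_apply_eq hk hpq.1
    obtain ⟨c, hc, hcb, hc'⟩ := exists_strictMono_apply_eq hl hpq.2
    refine ⟨r, c, hr, hc, fun i j _ => ?_⟩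
    by_cases hi : i = a
    · by_cases hj : j = b
      · simp [setOne, hi, hj, hra, hcb]
      · simp [setOne, frame, hc' j hj]
    · simp [setOne, frame, hr' i hi]

lemma weight_frame_le (a : Fin k) (b : Fin l) :
    weight (frame m n a b) ≤ (k - 1) * n + m * (l - 1) := by
  classical
  calc weight (frame m n a b)
      ≤ ((window m k a.val)ᶜ ×ˢ univ ∪ univ ×ˢ (window n l b.val)ᶜ).card :=
        card_le_card fun p hp => by
          simp only [frame, mem_filter, decide_eq_true_eq] at hp
          simpa [mem_union, mem_product] using hp.2
    _ ≤ (window m k a.val)ᶜ.card * n + m * (window n l b.val)ᶜ.card := by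
        simpa using card_union_le ((window m k a.val)ᶜ ×ˢ (univ : Finset (Fin n)))
          (univ ×ˢ (window n l b.val)ᶜ)
    _ ≤ (k - 1) * n + m * (l - 1) := by
        gcongr
        exacts [card_compl_window_le a.isLt, card_compl_window_le b.isLt]

lemma satF_le_mul_add (P : Fin k → Fin l → Bool) (n : ℕ) : satF P n n ≤ (k + l) * n := by
  by_cases hsmall : n < k ∨ n < l
  · rw [satF_eq_mul_of_lt hsmall]
    exact Nat.mul_le_mul_right _ (by omega)
  push Not at hsmall
  by_cases hP : ∃ i j, P i j = true
  · obtain ⟨a, b, hab⟩ := hP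
    calc satF P n n ≤ (k - 1) * n + n * (l - 1) :=
          (satF_le_weight (saturating_frame hab hsmall.1 hsmall.2)).trans (weight_frame_le a b)
      _ ≤ (k + l) * n := by nlinarith [Nat.sub_le k 1, Nat.sub_le l 1]
  · rw [satF_eq_zero_of_forall_eq_false (by simpa using hP) hsmall.1 hsmall.2]
    exact Nat.zero_le _

lemma le_mul_satF_of_lt_max {n : ℕ} (h : n < max k l) : n ≤ (max k l - 1) * satF P n n := by
  rw [satF_eq_mul_of_lt (by omega)]
  rcases Nat.eq_zero_or_pos n with rfl | hn
  · simp
  · nlinarith [Nat.le_mul_self n, show 1 ≤ max k l - 1 by omega]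

end

/-- with `k' = max k l`, if `sat(P,n₀,n₀) < n₀/(k'-1)` for some
`n₀ ≥ k'-1`, then `sat(P,n,n) ≤ sat(P,n₀,n₀)` for all `n ≥ n₀`; in particular
`sat(P,n,n)` is either `O(1)` or `Θ(n)`. -/
theorem sat_dichotomy {k l : ℕ} (P : Fin k → Fin l → Bool) :
    (∀ n₀ : ℕ, max k l - 1 ≤ n₀ → (max k l - 1) * satF P n₀ n₀ < n₀ →
      ∀ n : ℕ, n₀ ≤ n → satF P n n ≤ satF P n₀ n₀) ∧
    ((∃ C : ℕ, ∀ n : ℕ, satF P n n ≤ C) ∨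
     (∃ c C : ℕ, 0 < c ∧ ∀ n : ℕ, n ≤ c * satF P n n ∧ satF P n n ≤ C * n)) := by
  refine ⟨fun n₀ hn₀ h n hn => satF_le_satF_of_mul_lt hn₀ h hn, ?_⟩
  by_cases hseed : ∃ n₀, max k l - 1 ≤ n₀ ∧ (max k l - 1) * satF P n₀ n₀ < n₀
  · obtain ⟨n₀, hn₀, h⟩ := hseed
    refine .inl ⟨∑ i ∈ range (n₀ + 1), satF P i i, fun n => ?_⟩
    have hle {i : ℕ} (hi : i ≤ n₀) : satF P i i ≤ ∑ i ∈ range (n₀ + 1), satF P i i :=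
      single_le_sum (f := fun i => satF P i i) (fun _ _ => Nat.zero_le _) (mem_range.2 (by omega))
    rcases le_total n n₀ with hn | hn
    · exact hle hn
    · exact (satF_le_satF_of_mul_lt hn₀ h hn).trans (hle le_rfl)
  · push Not at hseed
    have hkl : 2 ≤ max k l := by
      by_contra! hkl
      simpa [show max k l - 1 = 0 by omega] using hseed 1 (by omega)
    refine .inr ⟨max k l - 1, k + l, by omega, fun n => ⟨?_, satF_le_mul_add P n⟩⟩
    rcases lt_or_ge n (max k l - 1) with hn | hn
    · exact le_mul_satF_of_lt_max (by omega)
    · exact hseed n hn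
end

section
/- For a k×l 0-1 pattern P, ssat(P,n,n) = O(1) if and only if all three hold: (1) the first and last row of P each contain a 1 entry that is the only 1 entry in its column; (2) the first and last column of P each contain a 1 entry that is the only 1 entry in its row; (3) P contains a 1 entry that is the only 1 entry in both its row and column. Otherwise ssat(P,n,n) = Θ(n). -/
/-! If `P` has the special `1`s, the matrix whose `1`s fill the four `(k + l) × (k + l)` corner
squares is semisaturating. A new `1` in a top (bottom) strip of rows is the image of the special
entry of the first (last) row of `P`; since that entry is alone in its column, every other `1` of
`P` is sent into a corner square by a placement that packs the remaining rows and columns of `P`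
against the borders. Left and right strips use the first and last columns, and a new `1` in the
middle uses the isolated entry. For an arbitrary nonzero `P` the same placements show that the
frame of the first and last `k - 1` rows and `l - 1` columns is semisaturating, so `ssat = O(n)`.

Conversely, if no entry of the first row of `P` is alone in its column, a new `1` at `(0, q)` can
only be the image of a first-row entry, so the occurrence needs a second `1` in column `q`: every
column of a semisaturating matrix is nonempty. The other borders are symmetric, and without an
isolated entry a new `1` at the crossing of an empty row and an empty column is impossible. -/

open Finset

section Order

variable {k n : ℕ} {r : Fin k → Fin n}

lemma StrictMono.fin_val_le (hr : StrictMono r) (i : Fin k) : i.val ≤ (r i).val := by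
  simpa using card_le_card_of_injOn r (s := Iio i) (t := Iio (r i))
    (fun x hx => by simpa using hr (by simpa using hx)) hr.injective.injOn

lemma StrictMono.fin_rev_val_le (hr : StrictMono r) (i : Fin k) :
    k - 1 - i.val ≤ n - 1 - (r i).val := by
  simpa using card_le_card_of_injOn r (s := Ioi i) (t := Ioi (r i))
    (fun x hx => by simpa using hr (by simpa using hx)) hr.injective.injOn

lemma StrictMono.fin_val_eq_zero (hr : StrictMono r) {i : Fin k} (h : (r i).val = 0) :
    i.val = 0 := by
  simpa [h] using hr.fin_val_le i

lemma StrictMono.fin_val_eq_pred (hr : StrictMono r) {i : Fin k} (h : (r i).val = n - 1) :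
    i.val = k - 1 := by
  have := hr.fin_rev_val_le i
  omega

lemma exists_strictMono_apply_eq_s16 (i₀ : Fin k) (p : Fin n) (h₁ : i₀.val ≤ p.val)
    (h₂ : p.val + k ≤ n + i₀.val) :
    ∃ r : Fin k → Fin n, StrictMono r ∧ r i₀ = p ∧
      ∀ i ≠ i₀, (r i).val < i₀.val ∨ n + i₀.val < (r i).val + k := by
  refine ⟨fun i => ⟨if i < i₀ then i.val else if i = i₀ then p.val else n - k + i.val,
    by split_ifs <;> omega⟩, fun a b hab => ?_, by ext; simp, fun i hi => ?_⟩
  · simp only [Fin.lt_def] at hab ⊢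
    split_ifs <;> omega
  · simp only [hi, if_false]
    split_ifs <;> omega

end Order

section Weight

variable {m n : ℕ} {M : Fin m → Fin n → Bool}

lemma weight_le_card (s : Finset (Fin m × Fin n)) (h : ∀ p q, M p q = true → (p, q) ∈ s) :
    weight M ≤ s.card :=
  card_le_card fun x hx => h x.1 x.2 (mem_filter.1 hx).2

lemma le_weight_of_forall_row (h : ∀ p, ∃ q, M p q = true) : m ≤ weight M := by
  choose f hf using h
  simpa [weight] using card_le_card_of_injOn (fun p => (p, f p)) (s := univ)
    (fun p _ => by simpa using hf p) (fun a _ b _ hab => congrArg Prod.fst hab)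

lemma le_weight_of_forall_col (h : ∀ q, ∃ p, M p q = true) : n ≤ weight M := by
  choose f hf using h
  simpa [weight] using card_le_card_of_injOn (fun q => (f q, q)) (s := univ)
    (fun q _ => by simpa using hf q) (fun a _ b _ hab => congrArg Prod.snd hab)

end Weight

def band (w n : ℕ) : Finset (Fin n) :=
  univ.filter fun x => x.val < w ∨ n ≤ x.val + w

@[simp]
lemma mem_band {w n : ℕ} {x : Fin n} : x ∈ band w n ↔ x.val < w ∨ n ≤ x.val + w := by
  simp [band]

lemma band_mono {w w' n : ℕ} (h : w ≤ w') : band w n ⊆ band w' n := by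
  intro x hx
  simp only [mem_band] at hx ⊢
  omega

lemma card_band_le (w n : ℕ) : (band w n).card ≤ 2 * w :=
  calc (band w n).card ≤ (range w ∪ Ico (n - w) n).card :=
        card_le_card_of_injOn Fin.val (fun x hx => by simp at hx ⊢; omega)
          Fin.val_injective.injOn
    _ ≤ w + (n - (n - w)) := by simpa using card_union_le (range w) (Ico (n - w) n)
    _ ≤ 2 * w := by omega

section Occurrence

variable {k l m n : ℕ} {P : Fin k → Fin l → Bool} {M : Fin m → Fin n → Bool}

lemma exists_new_isOcc {p : Fin m} {q : Fin n} (hpq : M p q = false) {i₀ : Fin k} {j₀ : Fin l}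
    (hP : P i₀ j₀ = true) {r : Fin k → Fin m} {c : Fin l → Fin n} (hr : StrictMono r)
    (hc : StrictMono c) (hrp : r i₀ = p) (hcq : c j₀ = q)
    (hM : ∀ i j, P i j = true → (i, j) ≠ (i₀, j₀) → M (r i) (c j) = true) :
    ∃ r c, IsOcc P (setOne M p q) r c ∧ ¬ IsOcc P M r c := by
  refine ⟨r, c, ⟨hr, hc, fun i j hij => ?_⟩, fun ⟨_, _, hall⟩ => ?_⟩
  · by_cases hij₀ : (i, j) = (i₀, j₀)
    · simp_all [setOne]
    · simp [setOne, hM i j hij hij₀]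
  · simpa [hrp, hcq, hpq] using hall i₀ j₀ hP

lemma Semisaturating.exists_occ_through (hs : Semisaturating P M) {p : Fin m} {q : Fin n}
    (hpq : M p q = false) :
    ∃ (r : Fin k → Fin m) (c : Fin l → Fin n) (i : Fin k) (j : Fin l),
      StrictMono r ∧ StrictMono c ∧ P i j = true ∧ r i = p ∧ c j = q ∧
      ∀ i' j', P i' j' = true → (i', j') ≠ (i, j) → M (r i') (c j') = true := by
  obtain ⟨r, c, ⟨hr, hc, hnew⟩, hold⟩ := hs p q hpq
  obtain ⟨i, j, hij, hMij⟩ : ∃ i j, P i j = true ∧ M (r i) (c j) = false := by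
    by_contra! h
    exact hold ⟨hr, hc, fun i j hij => by simpa using h i j hij⟩
  have hpos : r i = p ∧ c j = q := by
    by_contra hne
    simpa [setOne, hne, hMij] using hnew i j hij
  refine ⟨r, c, i, j, hr, hc, hij, hpos.1, hpos.2, fun i' j' hij' hne => ?_⟩
  have : ¬ (r i' = p ∧ c j' = q) := fun h =>
    hne (Prod.ext (hr.injective (h.1.trans hpos.1.symm)) (hc.injective (h.2.trans hpos.2.symm)))
  simpa [setOne, this] using hnew i' j' hij'

end Occurrence

section Pattern

variable {k l : ℕ} (P : Fin k → Fin l → Bool)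

def SoleInCol (i : Fin k) (j : Fin l) : Prop :=
  P i j = true ∧ ∀ i', P i' j = true → i' = i

def SoleInRow (i : Fin k) (j : Fin l) : Prop :=
  P i j = true ∧ ∀ j', P i j' = true → j' = j

def IsIsolated (i : Fin k) (j : Fin l) : Prop :=
  P i j = true ∧ (∀ i', P i' j = true → i' = i) ∧ (∀ j', P i j' = true → j' = j)

def HasSpecialOnes (hk : 0 < k) (hl : 0 < l) : Prop :=
  (∃ j, SoleInCol P ⟨0, hk⟩ j) ∧ (∃ j, SoleInCol P ⟨k - 1, Nat.sub_lt hk Nat.one_pos⟩ j) ∧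
    (∃ i, SoleInRow P i ⟨0, hl⟩) ∧ (∃ i, SoleInRow P i ⟨l - 1, Nat.sub_lt hl Nat.one_pos⟩) ∧
    ∃ i j, IsIsolated P i j

end Pattern

section LowerBound

variable {k l m n : ℕ} {P : Fin k → Fin l → Bool} {M : Fin m → Fin n → Bool}

lemma Semisaturating.exists_one_in_col (hs : Semisaturating P M) {p : Fin m} {i₀ : Fin k}
    (hp : ∀ r : Fin k → Fin m, StrictMono r → ∀ i, r i = p → i = i₀)
    (hP : ¬ ∃ j, SoleInCol P i₀ j) (q : Fin n) : ∃ p', M p' q = true := by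
  cases hpq : M p q
  · obtain ⟨r, c, i, j, hr, -, hij, hri, hcj, hM⟩ := hs.exists_occ_through hpq
    obtain rfl := hp r hr i hri
    obtain ⟨i', hi'j, hi'⟩ : ∃ i', P i' j = true ∧ i' ≠ i := by
      simpa [SoleInCol, hij] using not_exists.1 hP j
    exact ⟨r i', hcj ▸ hM i' j hi'j (by simpa using hi')⟩
  · exact ⟨p, hpq⟩

lemma Semisaturating.exists_one_in_row (hs : Semisaturating P M) {q : Fin n} {j₀ : Fin l}
    (hq : ∀ c : Fin l → Fin n, StrictMono c → ∀ j, c j = q → j = j₀)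
    (hP : ¬ ∃ i, SoleInRow P i j₀) (p : Fin m) : ∃ q', M p q' = true := by
  cases hpq : M p q
  · obtain ⟨r, c, i, j, -, hc, hij, hri, hcj, hM⟩ := hs.exists_occ_through hpq
    obtain rfl := hq c hc j hcj
    obtain ⟨j', hij', hj'⟩ : ∃ j', P i j' = true ∧ j' ≠ j := by
      simpa [SoleInRow, hij] using not_exists.1 hP i
    exact ⟨c j', hri ▸ hM i j' hij' (by simpa using hj')⟩
  · exact ⟨q, hpq⟩

lemma Semisaturating.le_weight_of_not_isIsolated {M : Fin n → Fin n → Bool}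
    (hs : Semisaturating P M) (hP : ¬ ∃ i j, IsIsolated P i j) : n ≤ weight M := by
  by_contra! hw
  obtain ⟨p, hp⟩ : ∃ p, ∀ q, M p q = false := by
    by_contra! h
    exact hw.not_ge (le_weight_of_forall_row fun p => by simpa using h p)
  obtain ⟨q, hq⟩ : ∃ q, ∀ p, M p q = false := by
    by_contra! h
    exact hw.not_ge (le_weight_of_forall_col fun q => by simpa using h q)
  obtain ⟨r, c, i, j, -, -, hij, hri, hcj, hM⟩ := hs.exists_occ_through (hp q)
  simp only [IsIsolated, not_exists, not_and, not_forall] at hP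
  by_cases hcol : ∀ i', P i' j = true → i' = i
  · obtain ⟨j', hij', hj'⟩ := hP i j hij hcol
    simpa [hri, hp] using hM i j' hij' (by simpa using hj')
  · obtain ⟨i', hi'j, hi'⟩ := not_forall₂.1 hcol
    simpa [hcj, hq] using hM i' j hi'j (by simpa using hi')

lemma Semisaturating.le_weight_of_not_hasSpecialOnes (hk : 0 < k) (hl : 0 < l)
    {M : Fin n → Fin n → Bool} (hs : Semisaturating P M) (hP : ¬ HasSpecialOnes P hk hl) :
    n ≤ weight M := by
  rcases Nat.eq_zero_or_pos n with rfl | hn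
  · exact Nat.zero_le _
  have hlast : n - 1 < n := Nat.sub_lt hn Nat.one_pos
  simp only [HasSpecialOnes, not_and_or] at hP
  rcases hP with h | h | h | h | h
  · refine le_weight_of_forall_col (hs.exists_one_in_col (p := ⟨0, hn⟩) (fun r hr i hi => ?_) h)
    exact Fin.ext (hr.fin_val_eq_zero (by simp [hi]))
  · refine le_weight_of_forall_col
      (hs.exists_one_in_col (p := ⟨n - 1, hlast⟩) (fun r hr i hi => ?_) h)
    exact Fin.ext (hr.fin_val_eq_pred (by simp [hi]))
  · refine le_weight_of_forall_row (hs.exists_one_in_row (q := ⟨0, hn⟩) (fun c hc j hj => ?_) h)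
    exact Fin.ext (hc.fin_val_eq_zero (by simp [hj]))
  · refine le_weight_of_forall_row
      (hs.exists_one_in_row (q := ⟨n - 1, hlast⟩) (fun c hc j hj => ?_) h)
    exact Fin.ext (hc.fin_val_eq_pred (by simp [hj]))
  · exact hs.le_weight_of_not_isIsolated h

end LowerBound

section UpperBound

variable {k l : ℕ} {P : Fin k → Fin l → Bool}

def frameMatrix (k l n : ℕ) : Fin n → Fin n → Bool :=
  fun p q => decide (p ∈ band (k - 1) n ∨ q ∈ band (l - 1) n)

def cornerMatrix (w n : ℕ) : Fin n → Fin n → Bool :=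
  fun p q => decide (p ∈ band w n ∧ q ∈ band w n)

lemma weight_frameMatrix_le (k l n : ℕ) : weight (frameMatrix k l n) ≤ (2 * k + 2 * l) * n := by
  calc weight (frameMatrix k l n)
      ≤ (band (k - 1) n ×ˢ (univ : Finset (Fin n)) ∪ univ ×ˢ band (l - 1) n).card :=
        weight_le_card _ fun p q h => by simpa [frameMatrix] using h
    _ ≤ (band (k - 1) n).card * n + n * (band (l - 1) n).card := by
        simpa using card_union_le (band (k - 1) n ×ˢ (univ : Finset (Fin n)))
          (univ ×ˢ band (l - 1) n)
    _ ≤ 2 * k * n + n * (2 * l) := by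
        gcongr <;> exact (card_band_le _ _).trans (by omega)
    _ = (2 * k + 2 * l) * n := by ring

lemma weight_cornerMatrix_le (w n : ℕ) : weight (cornerMatrix w n) ≤ (2 * w) ^ 2 := by
  calc weight (cornerMatrix w n) ≤ (band w n ×ˢ band w n).card :=
        weight_le_card _ fun p q h => by simpa [cornerMatrix] using h
    _ ≤ (2 * w) ^ 2 := by
        rw [card_product, sq]; gcongr <;> apply card_band_le

lemma exists_new_isOcc_placing {m n : ℕ} {M : Fin m → Fin n → Bool} {p : Fin m} {q : Fin n}
    (hpq : M p q = false) {i₀ : Fin k} {j₀ : Fin l} (hP : P i₀ j₀ = true)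
    (hp : i₀.val ≤ p.val ∧ p.val + k ≤ m + i₀.val) (hq : j₀.val ≤ q.val ∧ q.val + l ≤ n + j₀.val)
    (hM : ∀ (r : Fin k → Fin m) (c : Fin l → Fin n), r i₀ = p → c j₀ = q →
      (∀ i ≠ i₀, r i ∈ band (k - 1) m) → (∀ j ≠ j₀, c j ∈ band (l - 1) n) →
      ∀ i j, P i j = true → (i, j) ≠ (i₀, j₀) → M (r i) (c j) = true) :
    ∃ r c, IsOcc P (setOne M p q) r c ∧ ¬ IsOcc P M r c := by
  obtain ⟨r, hr, hrp, hrband⟩ := exists_strictMono_apply_eq_s16 i₀ p hp.1 hp.2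
  obtain ⟨c, hc, hcq, hcband⟩ := exists_strictMono_apply_eq_s16 j₀ q hq.1 hq.2
  refine exists_new_isOcc hpq hP hr hc hrp hcq (hM r c hrp hcq (fun i hi => ?_) fun j hj => ?_)
  · have := hrband i hi; simp only [mem_band]; omega
  · have := hcband j hj; simp only [mem_band]; omega

lemma frameMatrix_semisaturating (n : ℕ) {i₀ : Fin k} {j₀ : Fin l} (hP : P i₀ j₀ = true) :
    Semisaturating P (frameMatrix k l n) := by
  intro p q hpq
  have hpq' := hpq
  simp only [frameMatrix, mem_band, decide_eq_false_iff_not, not_or, not_lt, not_le] at hpq'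
  refine exists_new_isOcc_placing hpq hP (by omega) (by omega)
    fun r c _ _ hr hc i j _ hij => ?_
  simp only [frameMatrix, decide_eq_true_eq]
  by_cases hi : i = i₀
  · exact .inr (hc j fun hj => hij (by rw [hi, hj]))
  · exact .inl (hr i hi)

lemma exists_new_isOcc_cornerMatrix {w n : ℕ} (hkw : k ≤ w) (hlw : l ≤ w) {p q : Fin n}
    (hpq : cornerMatrix w n p q = false) {i₀ : Fin k} {j₀ : Fin l} (hP : P i₀ j₀ = true)
    (hp : i₀.val ≤ p.val ∧ p.val + k ≤ n + i₀.val) (hq : j₀.val ≤ q.val ∧ q.val + l ≤ n + j₀.val)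
    (hrow : (∀ j, P i₀ j = true → j = j₀) ∨ p ∈ band w n)
    (hcol : (∀ i, P i j₀ = true → i = i₀) ∨ q ∈ band w n) :
    ∃ r c, IsOcc P (setOne (cornerMatrix w n) p q) r c ∧ ¬ IsOcc P (cornerMatrix w n) r c := by
  refine exists_new_isOcc_placing hpq hP hp hq fun r c hrp hcq hr hc i j hij hne => ?_
  simp only [cornerMatrix, decide_eq_true_eq]
  constructor
  · by_cases hi : i = i₀
    · subst hi
      rcases hrow with hrow | hrow
      · exact absurd (by rw [hrow j hij]) hne
      · rwa [hrp]
    · exact band_mono (by omega) (hr i hi)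
  · by_cases hj : j = j₀
    · subst hj
      rcases hcol with hcol | hcol
      · exact absurd (by rw [hcol i hij]) hne
      · rwa [hcq]
    · exact band_mono (by omega) (hc j hj)

lemma cornerMatrix_semisaturating (hk : 0 < k) (hl : 0 < l) (hP : HasSpecialOnes P hk hl)
    (n : ℕ) : Semisaturating P (cornerMatrix (k + l) n) := by
  obtain ⟨⟨j₁, hj₁⟩, ⟨j₂, hj₂⟩, ⟨i₃, hi₃⟩, ⟨i₄, hi₄⟩, i₅, j₅, h₅⟩ := hP
  have := i₃.isLt; have := i₄.isLt; have := i₅.isLt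
  have := j₁.isLt; have := j₂.isLt; have := j₅.isLt
  intro p q hpq
  by_cases hp : p ∈ band (k + l) n
  · have hq : q ∉ band (k + l) n := fun hq => by simp [cornerMatrix, hp, hq] at hpq
    rw [mem_band] at hq
    rcases mem_band.1 hp with htop | hbot
    · exact exists_new_isOcc_cornerMatrix (by omega) (by omega) hpq hj₁.1
        (by dsimp only; omega) (by omega) (.inr hp) (.inl hj₁.2)
    · exact exists_new_isOcc_cornerMatrix (by omega) (by omega) hpq hj₂.1
        (by dsimp only; omega) (by omega) (.inr hp) (.inl hj₂.2)
  · rw [mem_band] at hp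
    by_cases hq : q ∈ band (k + l) n
    · rcases mem_band.1 hq with hleft | hright
      · exact exists_new_isOcc_cornerMatrix (by omega) (by omega) hpq hi₃.1 (by omega)
          (by dsimp only; omega) (.inl hi₃.2) (.inr hq)
      · exact exists_new_isOcc_cornerMatrix (by omega) (by omega) hpq hi₄.1 (by omega)
          (by dsimp only; omega) (.inl hi₄.2) (.inr hq)
    · rw [mem_band] at hq
      exact exists_new_isOcc_cornerMatrix (by omega) (by omega) hpq h₅.1 (by omega) (by omega)
        (.inl h₅.2.2) (.inl h₅.2.1)

end UpperBound

section Ssat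

variable {k l n : ℕ} {P : Fin k → Fin l → Bool}

lemma ssatF_le_weight {M : Fin n → Fin n → Bool} (hM : Semisaturating P M) :
    ssatF P n n ≤ weight M :=
  Nat.sInf_le ⟨M, hM, rfl⟩

lemma le_ssatF_of_not_hasSpecialOnes (hk : 0 < k) (hl : 0 < l) (hP : ¬ HasSpecialOnes P hk hl) :
    n ≤ ssatF P n n := by
  have hne : {w | ∃ M : Fin n → Fin n → Bool, Semisaturating P M ∧ weight M = w}.Nonempty :=
    ⟨_, fun _ _ => true, fun p q h => by simp at h, rfl⟩
  refine le_csInf hne ?_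
  rintro _ ⟨M, hM, rfl⟩
  exact hM.le_weight_of_not_hasSpecialOnes hk hl hP

end Ssat

/-- for a (not-all-zero) `k × l` pattern `P`, `ssat(P,n,n) = O(1)` if
and only if the three special-entry properties hold; otherwise `ssat(P,n,n) = Θ(n)`. -/
theorem ssat_characterization {k l : ℕ} (hk : 0 < k) (hl : 0 < l)
    (P : Fin k → Fin l → Bool) (hP : ∃ i j, P i j = true) :
    (((∃ j : Fin l, P ⟨0, hk⟩ j = true ∧ ∀ i : Fin k, P i j = true → i = ⟨0, hk⟩) ∧
      (∃ j : Fin l, P ⟨k - 1, by omega⟩ j = true ∧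
        ∀ i : Fin k, P i j = true → i = ⟨k - 1, by omega⟩) ∧
      (∃ i : Fin k, P i ⟨0, hl⟩ = true ∧ ∀ j : Fin l, P i j = true → j = ⟨0, hl⟩) ∧
      (∃ i : Fin k, P i ⟨l - 1, by omega⟩ = true ∧
        ∀ j : Fin l, P i j = true → j = ⟨l - 1, by omega⟩) ∧
      (∃ (i : Fin k) (j : Fin l), P i j = true ∧
        (∀ i' : Fin k, P i' j = true → i' = i) ∧
        (∀ j' : Fin l, P i j' = true → j' = j)))
      ↔ (∃ C : ℕ, ∀ n : ℕ, ssatF P n n ≤ C)) ∧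
    (¬((∃ j : Fin l, P ⟨0, hk⟩ j = true ∧ ∀ i : Fin k, P i j = true → i = ⟨0, hk⟩) ∧
      (∃ j : Fin l, P ⟨k - 1, by omega⟩ j = true ∧
        ∀ i : Fin k, P i j = true → i = ⟨k - 1, by omega⟩) ∧
      (∃ i : Fin k, P i ⟨0, hl⟩ = true ∧ ∀ j : Fin l, P i j = true → j = ⟨0, hl⟩) ∧
      (∃ i : Fin k, P i ⟨l - 1, by omega⟩ = true ∧
        ∀ j : Fin l, P i j = true → j = ⟨l - 1, by omega⟩) ∧
      (∃ (i : Fin k) (j : Fin l), P i j = true ∧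
        (∀ i' : Fin k, P i' j = true → i' = i) ∧
        (∀ j' : Fin l, P i j' = true → j' = j))) →
      ∃ C : ℕ, 0 < C ∧ ∀ n : ℕ, n ≤ ssatF P n n ∧ ssatF P n n ≤ C * n) := by
  change (HasSpecialOnes P hk hl ↔ _) ∧ (¬ HasSpecialOnes P hk hl → _)
  obtain ⟨i₀, j₀, hP⟩ := hP
  refine ⟨⟨fun h => ⟨(2 * (k + l)) ^ 2, fun n => ?_⟩, fun ⟨C, hC⟩ => ?_⟩,
    fun h => ⟨2 * k + 2 * l, by omega, fun n => ⟨le_ssatF_of_not_hasSpecialOnes hk hl h, ?_⟩⟩⟩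
  · exact (ssatF_le_weight (cornerMatrix_semisaturating hk hl h n)).trans
      (weight_cornerMatrix_le _ n)
  · by_contra h
    have hlow := le_ssatF_of_not_hasSpecialOnes (n := C + 1) hk hl h
    have hup := hC (C + 1)
    omega
  · exact (ssatF_le_weight (frameMatrix_semisaturating n hP)).trans (weight_frameMatrix_le k l n)
end

section
/- If a k×l pattern P has a single 1 entry located at position (k',l'), then ssat(P,m,n) = sat(P,m,n) = (k−1)n + (l−1)m − (k−1)(l−1) for all m ≥ k, n ≥ l. -/
private lemma sm_le' {k m : ℕ} {r : Fin k → Fin m} (hr : StrictMono r) (i : Fin k) :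
    i.val ≤ (r i).val := by
  induction' hv : i.val with v ih generalizing i
  · omega
  · have hv' : v < k := by omega
    have h1 := ih ⟨v, hv'⟩ rfl
    have h2 : (⟨v, hv'⟩ : Fin k) < i := by rw [Fin.lt_def]; simp; omega
    have h3 := hr h2
    rw [Fin.lt_def] at h3
    omega

private lemma sm_bounds' {k m : ℕ} {r : Fin k → Fin m} (hr : StrictMono r) (i : Fin k) :
    i.val ≤ (r i).val ∧ (r i).val + k ≤ m + i.val := by
  refine ⟨sm_le' hr i, ?_⟩
  have hr' : StrictMono (fun j : Fin k => (r j.rev).rev) := by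
    intro a b hab
    simp only [Fin.rev_lt_rev]
    exact hr (Fin.rev_lt_rev.mpr hab)
  have := sm_le' hr' i.rev
  simp only [Fin.rev_rev, Fin.val_rev] at this
  have := i.isLt
  have := (r i).isLt
  omega

private lemma exists_sm' {k m : ℕ} (k' : Fin k) (p : Fin m) (h1 : k'.val ≤ p.val)
    (h2 : p.val + k ≤ m + k'.val) :
    ∃ r : Fin k → Fin m, StrictMono r ∧ r k' = p := by
  refine ⟨fun i => ⟨p.val + i.val - k'.val, by have := i.isLt; omega⟩, ?_, ?_⟩
  · intro a b hab
    rw [Fin.lt_def] at hab ⊢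
    simp only
    omega
  · apply Fin.ext
    simp

private lemma contains_iff' {k l m n : ℕ} (P : Fin k → Fin l → Bool)
    (k' : Fin k) (l' : Fin l) (hP : P k' l' = true)
    (huniq : ∀ (i : Fin k) (j : Fin l), P i j = true → i = k' ∧ j = l')
    (M : Fin m → Fin n → Bool) :
    Contains P M ↔ ∃ p q, M p q = true ∧
      (k'.val ≤ p.val ∧ p.val + k ≤ m + k'.val) ∧
      (l'.val ≤ q.val ∧ q.val + l ≤ n + l'.val) := by
  constructor
  · rintro ⟨r, c, hr, hc, h⟩
    exact ⟨r k', c l', h _ _ hP, sm_bounds' hr k', sm_bounds' hc l'⟩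
  · rintro ⟨p, q, hM, hp, hq⟩
    obtain ⟨r, hr, hrk⟩ := exists_sm' k' p hp.1 hp.2
    obtain ⟨c, hc, hcl⟩ := exists_sm' l' q hq.1 hq.2
    refine ⟨r, c, hr, hc, fun i j hij => ?_⟩
    obtain ⟨hi, hj⟩ := huniq i j hij
    subst hi hj
    rw [hrk, hcl]
    exact hM

private lemma semisat_iff' {k l m n : ℕ} (P : Fin k → Fin l → Bool)
    (k' : Fin k) (l' : Fin l) (hP : P k' l' = true)
    (huniq : ∀ (i : Fin k) (j : Fin l), P i j = true → i = k' ∧ j = l')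
    (M : Fin m → Fin n → Bool) :
    Semisaturating P M ↔ ∀ p q, M p q = false →
      (k'.val ≤ p.val ∧ p.val + k ≤ m + k'.val) ∧
      (l'.val ≤ q.val ∧ q.val + l ≤ n + l'.val) := by
  constructor
  · intro h p q hpq
    obtain ⟨r, c, ⟨hr, hc, hocc⟩, hnot⟩ := h p q hpq
    have hne : ¬ ∀ i j, P i j = true → M (r i) (c j) = true :=
      fun hh => hnot ⟨hr, hc, hh⟩
    push_neg at hne
    obtain ⟨i, j, hij, hMij⟩ := hne
    obtain ⟨hi, hj⟩ := huniq i j hij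
    rw [hi, hj] at hMij
    have h1 := hocc k' l' hP
    simp only [setOne] at h1
    split_ifs at h1 with hcond
    · obtain ⟨e1, e2⟩ := hcond
      rw [← e1, ← e2]
      exact ⟨sm_bounds' hr k', sm_bounds' hc l'⟩
    · exact absurd h1 hMij
  · intro h p q hpq
    obtain ⟨hp, hq⟩ := h p q hpq
    obtain ⟨r, hr, hrk⟩ := exists_sm' k' p hp.1 hp.2
    obtain ⟨c, hc, hcl⟩ := exists_sm' l' q hq.1 hq.2
    refine ⟨r, c, ⟨hr, hc, fun i j hij => ?_⟩, ?_⟩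
    · obtain ⟨hi, hj⟩ := huniq i j hij
      subst hi hj
      simp [setOne, hrk, hcl]
    · rintro ⟨_, _, hocc⟩
      have := hocc k' l' hP
      rw [hrk, hcl, hpq] at this
      exact absurd this (by simp)

private lemma card_range' {m k : ℕ} (k' : Fin k) (hm : k ≤ m) :
    (Finset.univ.filter (fun p : Fin m => k'.val ≤ p.val ∧ p.val + k ≤ m + k'.val)).card
      = m - k + 1 := by
  have hk := k'.isLt
  have h1 : 0 < m := by omega
  have : (Finset.univ.filter (fun p : Fin m => k'.val ≤ p.val ∧ p.val + k ≤ m + k'.val))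
      = Finset.Icc ⟨k'.val, by omega⟩ ⟨m - k + k'.val, by omega⟩ := by
    ext p
    simp [Finset.mem_Icc, Fin.le_def]
    omega
  rw [this, Fin.card_Icc]
  simp
  omega

private lemma weight_lemma' {m n : ℕ} (M : Fin m → Fin n → Bool) (C : Fin m → Fin n → Prop)
    [∀ p q, Decidable (C p q)]
    (h : ∀ p q, M p q = false → C p q) :
    weight M ≥ m * n - (Finset.univ.filter (fun p : Fin m × Fin n => C p.1 p.2)).card := by
  have h1 : (Finset.univ.filter (fun p : Fin m × Fin n => ¬ M p.1 p.2 = true))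
      ⊆ (Finset.univ.filter (fun p : Fin m × Fin n => C p.1 p.2)) := by
    intro p hp
    simp at hp ⊢
    exact h _ _ hp
  have h2 := Finset.card_le_card h1
  have h3 := Finset.card_filter_add_card_filter_not
    (s := (Finset.univ : Finset (Fin m × Fin n)))
    (p := fun p : Fin m × Fin n => M p.1 p.2 = true)
  simp only [Finset.card_univ, Fintype.card_prod, Fintype.card_fin] at h3
  unfold weight
  omega

private lemma prod_filter_card' {m n : ℕ} (A : Fin m → Prop) (B : Fin n → Prop)
    [∀ p, Decidable (A p)] [∀ q, Decidable (B q)] :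
    (Finset.univ.filter (fun p : Fin m × Fin n => A p.1 ∧ B p.2)).card
      = (Finset.univ.filter A).card * (Finset.univ.filter B).card := by
  rw [← Finset.card_product]
  congr 1
  rw [← Finset.univ_product_univ, Finset.filter_product]

private lemma arith' (a b k0 l0 : ℕ) :
    (a + k0 + 1) * (b + l0 + 1) - (a + 1) * (b + 1)
      = k0 * (b + l0 + 1) + l0 * (a + k0 + 1) - k0 * l0 := by
  have h1 : (a + k0 + 1) * (b + l0 + 1)
      = (a + 1) * (b + 1) + ((a + 1) * l0 + k0 * (b + l0 + 1)) := by ring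
  have h2 : k0 * (b + l0 + 1) + l0 * (a + k0 + 1)
      = k0 * l0 + ((a + 1) * l0 + k0 * (b + l0 + 1)) := by ring
  omega


/-- if `P` has a single `1` entry, at position `(k',l')`, then
`ssat(P,m,n) = sat(P,m,n) = (k-1)n + (l-1)m - (k-1)(l-1)` for `m ≥ k`, `n ≥ l`. -/
theorem ssat_sat_single_one {k l : ℕ} (P : Fin k → Fin l → Bool)
    (k' : Fin k) (l' : Fin l) (hP : P k' l' = true)
    (huniq : ∀ (i : Fin k) (j : Fin l), P i j = true → i = k' ∧ j = l')
    (m n : ℕ) (hm : k ≤ m) (hn : l ≤ n) :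
    ssatF P m n = (k - 1) * n + (l - 1) * m - (k - 1) * (l - 1) ∧
    satF P m n = (k - 1) * n + (l - 1) * m - (k - 1) * (l - 1) := by
  classical
  have hk := k'.isLt
  have hl := l'.isLt
  set InRow : Fin m → Prop := fun p => k'.val ≤ p.val ∧ p.val + k ≤ m + k'.val with hRdef
  set InCol : Fin n → Prop := fun q => l'.val ≤ q.val ∧ q.val + l ≤ n + l'.val with hCdef
  set W : ℕ := (k - 1) * n + (l - 1) * m - (k - 1) * (l - 1) with hWdef
  -- the rectangle cardinality
  have hcardR : (Finset.univ.filter (fun p : Fin m × Fin n => InRow p.1 ∧ InCol p.2)).card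
      = (m - k + 1) * (n - l + 1) := by
    rw [prod_filter_card', card_range' k' hm, card_range' l' hn]
  have hWeq : m * n - (m - k + 1) * (n - l + 1) = W := by
    obtain ⟨a, ha⟩ : ∃ a, m = a + k := ⟨m - k, by omega⟩
    obtain ⟨b, hb⟩ : ∃ b, n = b + l := ⟨n - l, by omega⟩
    obtain ⟨k0, hk0⟩ : ∃ k0, k = k0 + 1 := ⟨k - 1, by omega⟩
    obtain ⟨l0, hl0⟩ : ∃ l0, l = l0 + 1 := ⟨l - 1, by omega⟩
    subst ha hb hk0 hl0
    have := arith' a b k0 l0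
    simp only [hWdef]
    have e1 : a + (k0 + 1) = a + k0 + 1 := by ring
    have e2 : b + (l0 + 1) = b + l0 + 1 := by ring
    rw [e1, e2]
    simpa using this
  -- the extremal matrix
  set M₀ : Fin m → Fin n → Bool := fun p q => decide (¬ (InRow p ∧ InCol q)) with hM0def
  have hM0true : ∀ p q, M₀ p q = true ↔ ¬ (InRow p ∧ InCol q) := by
    intro p q; simp [hM0def]; tauto
  have hM0false : ∀ p q, M₀ p q = false ↔ (InRow p ∧ InCol q) := by
    intro p q; simp [hM0def]
  have hw0 : weight M₀ = W := by
    unfold weight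
    have hfe : (Finset.univ.filter (fun p : Fin m × Fin n => M₀ p.1 p.2 = true))
        = (Finset.univ.filter (fun p : Fin m × Fin n => ¬ (InRow p.1 ∧ InCol p.2))) := by
      ext p
      simp [hM0true]
    rw [hfe]
    have h3 := Finset.card_filter_add_card_filter_not
      (s := (Finset.univ : Finset (Fin m × Fin n)))
      (p := fun p : Fin m × Fin n => InRow p.1 ∧ InCol p.2)
    simp only [Finset.card_univ, Fintype.card_prod, Fintype.card_fin] at h3
    omega
  -- M₀ is semisaturating
  have hsemi0 : Semisaturating P M₀ := by
    rw [semisat_iff' P k' l' hP huniq]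
    intro p q hpq
    exact (hM0false p q).mp hpq
  -- M₀ is saturating
  have hsat0 : Saturating P M₀ := by
    constructor
    · rw [Avoids, contains_iff' P k' l' hP huniq]
      rintro ⟨p, q, hMt, hp, hq⟩
      exact ((hM0true p q).mp hMt) ⟨hp, hq⟩
    · intro p q hpq
      obtain ⟨hp, hq⟩ := (hM0false p q).mp hpq
      rw [contains_iff' P k' l' hP huniq]
      exact ⟨p, q, by simp [setOne], hp, hq⟩
  -- lower bound for semisaturating matrices
  have hlb : ∀ M : Fin m → Fin n → Bool,
      (∀ p q, M p q = false → InRow p ∧ InCol q) → W ≤ weight M := by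
    intro M hM
    have := weight_lemma' M (fun p q => InRow p ∧ InCol q) hM
    rw [hcardR] at this
    omega
  unfold ssatF satF
  constructor
  · apply le_antisymm
    · exact Nat.sInf_le ⟨M₀, hsemi0, hw0⟩
    · refine le_csInf ?_ ?_
      · exact ⟨W, M₀, hsemi0, hw0⟩
      rintro w ⟨M, hMsemi, rfl⟩
      exact hlb M ((semisat_iff' P k' l' hP huniq M).mp hMsemi)
  · apply le_antisymm
    · exact Nat.sInf_le ⟨M₀, hsat0, hw0⟩
    · refine le_csInf ?_ ?_
      · exact ⟨W, M₀, hsat0, hw0⟩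
      rintro w ⟨M, ⟨hav, hsat⟩, rfl⟩
      apply hlb M
      intro p q hpq
      have := (contains_iff' P k' l' hP huniq _).mp (hsat p q hpq)
      obtain ⟨p', q', hM', hp', hq'⟩ := this
      simp only [setOne] at hM'
      split_ifs at hM' with hcond
      · obtain ⟨e1, e2⟩ := hcond
        subst e1 e2
        exact ⟨hp', hq'⟩
      · exact absurd ((contains_iff' P k' l' hP huniq M).mpr ⟨p', q', hM', hp', hq'⟩) hav
end
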